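/- arXiv:1808.03805 — 3 statements merged into one kernel-verified Lean document; each statement's English description precedes it below -/
import Mathlib

section
/- Let A be a unital C*-algebra, B ⊆ A a C*-subalgebra, and P : A → B a contractive linear projection (P∘P = P, ‖P‖ ≤ 1, P(A) = B) with P(1) = 1. Then P is positive: P(a) ≥ 0 for every a ≥ 0 in A. -/
open scoped ComplexOrder

/-- A unital contractive projection from a unital C*-algebra onto a C*-subalgebra is positive. -/
theorem stmt4 {A : Type*} [NormedRing A] [StarRing A] [CStarRing A] [NormedAlgebra ℂ A]
    [CompleteSpace A] [StarModule ℂ A] [PartialOrder A] [StarOrderedRing A]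
    (B : StarSubalgebra ℂ A) (hB : IsClosed (B : Set A))
    (P : A →L[ℂ] A)
    (hidem : ∀ a, P (P a) = P a)
    (hrange : Set.range P = (B : Set A))
    (hnorm : ‖P‖ ≤ 1)
    (hone : P 1 = 1) :
    ∀ a : A, 0 ≤ a → 0 ≤ P a := by
  intro a ha
  letI : CStarAlgebra A := { }
  obtain hS | hN := subsingleton_or_nontrivial A
  · exact le_of_eq (Subsingleton.elim _ _)
  have hPle : ∀ z : A, ‖P z‖ ≤ ‖z‖ := fun z =>
    (P.le_opNorm z).trans (by nlinarith [norm_nonneg z])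
  have hsa : IsSelfAdjoint a := .of_nonneg ha
  set x := P a with hx
  set c : ℂ := -(2⁻¹ : ℂ) * Complex.I with hc
  have hstarc : star c = -c := by
    rw [hc]
    simp [Complex.ext_iff]
  have hnormc : ‖c‖ = 2⁻¹ := by
    rw [hc, norm_mul, Complex.norm_I, norm_neg, mul_one, norm_inv]
    norm_num
  set v : A := c • (x - star x) with hv
  have hvsa : IsSelfAdjoint v := by
    rw [hv, IsSelfAdjoint, star_smul, star_sub, star_star, hstarc]
    module
  -- key estimate
  have key : ∀ s : ℝ, ∀ μ ∈ spectrum ℝ v, (μ + s)^2 ≤ ‖a‖^2 + s^2 := by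
    intro s μ hμ
    set w : A := ((s : ℂ) * Complex.I) • 1 with hw
    have hstarw : star w = -w := by
      rw [hw, star_smul, star_one, ← neg_smul]
      congr 1
      simp [Complex.ext_iff]
    have hPz : P (a + w) = x + w := by
      rw [map_add, hw, map_smul, hone]
    have hwa : w * a = a * w := by
      rw [hw, smul_mul_assoc, one_mul, mul_smul_comm, mul_one]
    have hww : w * w = (-(s^2) : ℝ) • 1 := by
      rw [hw, smul_mul_assoc, one_mul, smul_smul, ← Complex.coe_smul]
      congr 1
      push_cast
      ring_nf
      rw [Complex.I_sq]
      ring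
    -- ‖a + w‖² ≤ ‖a‖² + s²
    have h1 : ‖a + w‖^2 ≤ ‖a‖^2 + s^2 := by
      have hmul : star (a + w) * (a + w) = a * a + (s^2 : ℝ) • 1 := by
        rw [star_add, hsa.star_eq, hstarw]
        have expand : (a + -w) * (a + w) = a * a + (a * w - w * a) - w * w := by
          noncomm_ring
        rw [expand, hwa, sub_self, add_zero, hww, neg_smul, sub_neg_eq_add]
      calc ‖a + w‖^2 = ‖star (a + w) * (a + w)‖ := by
            rw [CStarRing.norm_star_mul_self, pow_two]
        _ = ‖a * a + (s^2 : ℝ) • 1‖ := by rw [hmul]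
        _ ≤ ‖a * a‖ + ‖(s^2 : ℝ) • 1‖ := norm_add_le _ _
        _ ≤ ‖a‖^2 + s^2 := by
            rw [norm_smul, norm_one, mul_one, Real.norm_of_nonneg (sq_nonneg s)]
            gcongr
            rw [pow_two]; exact norm_mul_le a a
    -- μ + s ∈ spectrum of v + s•1
    have h2 : μ + s ∈ spectrum ℝ (v + algebraMap ℝ A s) := by
      rw [spectrum.add_mem_iff]
      simpa using hμ
    have h3 : |μ + s| ≤ ‖v + algebraMap ℝ A s‖ := by
      simpa using spectrum.norm_le_norm_of_mem h2
    -- v + s•1 is the imaginary part of (x + w)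
    have hsw : algebraMap ℝ A s = (c * ((2:ℂ) * ((s : ℂ) * Complex.I))) • (1 : A) := by
      rw [Algebra.algebraMap_eq_smul_one, ← Complex.coe_smul]
      congr 1
      rw [hc]
      ring_nf
      rw [Complex.I_sq]
      ring
    have h4 : v + algebraMap ℝ A s = c • ((x + w) - star (x + w)) := by
      rw [star_add, hstarw]
      have : x + w - (star x + -w) = (x - star x) + (2:ℂ) • w := by module
      rw [this, smul_add, ← hv, hw, smul_smul, smul_smul, hsw]
      congr 1
      rw [hc]
      ring
    have h5 : ‖v + algebraMap ℝ A s‖ ≤ ‖x + w‖ := by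
      rw [h4]
      calc ‖c • ((x + w) - star (x + w))‖
          = 2⁻¹ * ‖(x + w) - star (x + w)‖ := by rw [norm_smul, hnormc]
        _ ≤ 2⁻¹ * (‖x + w‖ + ‖star (x + w)‖) := by gcongr; exact norm_sub_le _ _
        _ = ‖x + w‖ := by rw [norm_star]; ring
    have h6 : ‖x + w‖ ≤ ‖a + w‖ := hPz ▸ hPle (a + w)
    calc (μ + s)^2 = |μ + s|^2 := (sq_abs _).symm
      _ ≤ ‖a + w‖^2 := by
          have := h3.trans (h5.trans h6)
          nlinarith [abs_nonneg (μ + s)]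
      _ ≤ ‖a‖^2 + s^2 := h1
  -- spectrum of v is {0}, so v = 0
  have hvzero : v = 0 := by
    have hspec : ∀ μ ∈ spectrum ℝ v, μ = 0 := by
      intro μ hμ
      by_contra hne
      have h1 := key (μ * (‖a‖^2 / (2 * μ^2) + 1)) μ hμ
      have hμ2 : (0:ℝ) < μ^2 := by positivity
      have h2 : μ^2 + 2 * (μ^2 * (‖a‖^2 / (2 * μ^2) + 1)) ≤ ‖a‖^2 := by nlinarith
      have h3 := mul_div_cancel₀ (‖a‖^2) (by positivity : (2 * μ^2 : ℝ) ≠ 0)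
      nlinarith [sq_nonneg μ]
    rcases CStarAlgebra.norm_or_neg_norm_mem_spectrum (ha := hvsa) with h | h
    · rw [← norm_eq_zero]; exact hspec _ h
    · rw [← norm_eq_zero]; simpa using (hspec _ h).symm
  have hxsa : IsSelfAdjoint x := by
    have hxv : x - star x = 0 := by
      have h := hvzero
      rw [hv, smul_eq_zero] at h
      rcases h with h | h
      · exfalso
        rw [hc] at h
        exact Complex.I_ne_zero (by simpa using h)
      · exact h
    rw [IsSelfAdjoint]
    linear_combination (norm := module) -hxv
  -- positivity via spectrum
  rw [nonneg_iff_isSelfAdjoint_and_quasispectrumRestricts, quasispectrumRestricts_iff_spectrumRestricts]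
  refine ⟨hxsa, SpectrumRestricts.nnreal_iff.mpr fun r hr => ?_⟩
  set t := ‖a‖ with ht
  have hca : 0 ≤ algebraMap ℝ A t - a := sub_nonneg.mpr hsa.le_algebraMap_norm_self
  have hle : ‖algebraMap ℝ A t - a‖ ≤ t := by
    rw [CStarAlgebra.norm_le_iff_le_algebraMap _ (norm_nonneg a) hca]
    simpa [ht] using ha
  have hPc : P (algebraMap ℝ A t) = algebraMap ℝ A t := by
    rw [Algebra.algebraMap_eq_smul_one, ← Complex.coe_smul, map_smul, hone]
  have hmem : t - r ∈ spectrum ℝ (algebraMap ℝ A t - x) := by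
    rw [← spectrum.singleton_sub_eq]
    exact Set.sub_mem_sub (Set.mem_singleton t) hr
  have habs : |t - r| ≤ t := by
    calc |t - r| ≤ ‖algebraMap ℝ A t - x‖ := by
          simpa using spectrum.norm_le_norm_of_mem hmem
      _ = ‖P (algebraMap ℝ A t - a)‖ := by rw [map_sub, hPc]
      _ ≤ ‖algebraMap ℝ A t - a‖ := hPle _
      _ ≤ t := hle
  linarith [(abs_le.mp habs).2]
end

section
/- Let A be a commutative semisimple regular Banach algebra with a bounded approximate identity bounded by c > 0, whose Gelfand spectrum is a locally compact Hausdorff space X. Then for every compact set K ⊆ X there exists u_K ∈ A with ‖u_K‖ ≤ c + 1 such that the Gelfand transform of u_K is identically 1 on K. -/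
/-!
Regularity with `F = ∅` gives `a` whose Gelfand transform is `1` on `K`. Correcting an element `e`
of the approximate identity by the small defect `a - e a` yields `u = e + (a - e a)`: its transform
is `ê + â - ê â = 1` wherever `â = 1`, and `‖u‖ ≤ c + ‖a - e a‖ ≤ c + 1` once `e a` is close to `a`.
-/

open Filter Topology WeakDual

theorem map_add_sub_mul_eq_one {R S F : Type*} [NonUnitalRing R] [CommRing S] [FunLike F R S]
    [NonUnitalRingHomClass F R S] (φ : F) {a : R} (ha : φ a = 1) (b : R) :
    φ (b + (a - b * a)) = 1 := by
  rw [map_add, map_sub, map_mul, ha]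
  ring

theorem exists_norm_add_sub_mul_le {R ι : Type*} [NormedRing R] {l : Filter ι} [l.NeBot]
    {e : ι → R} {c : ℝ} (he_bdd : ∀ i, ‖e i‖ ≤ c) {a : R}
    (he : Tendsto (fun i => e i * a) l (𝓝 a)) {ε : ℝ} (hε : 0 < ε) :
    ∃ i, ‖e i + (a - e i * a)‖ ≤ c + ε := by
  have hdefect : Tendsto (fun i => ‖a - e i * a‖) l (𝓝 0) := by
    simpa using (he.const_sub a).norm
  obtain ⟨i, hi⟩ := (hdefect.eventually (eventually_lt_nhds hε)).exists
  exact ⟨i, (norm_add_le _ _).trans (add_le_add (he_bdd i) hi.le)⟩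

theorem stmt10_general {A : Type*} [NormedCommRing A] [NormedAlgebra ℂ A]
    (hreg : ∀ (K F : Set (characterSpace ℂ A)), IsCompact K → IsClosed F → Disjoint K F →
      ∃ a : A, (∀ φ ∈ K, φ a = 1) ∧ ∀ φ ∈ F, φ a = 0)
    (c : ℝ)
    {ι : Type*} (l : Filter ι) [l.NeBot] (e : ι → A)
    (he_bdd : ∀ i, ‖e i‖ ≤ c)
    (he : ∀ a : A, Filter.Tendsto (fun i => e i * a) l (nhds a))
    (K : Set (characterSpace ℂ A)) (hK : IsCompact K) :
    ∃ u : A, ‖u‖ ≤ c + 1 ∧ ∀ φ ∈ K, φ u = 1 := by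
  obtain ⟨a, ha, -⟩ := hreg K ∅ hK isClosed_empty (Set.disjoint_empty K)
  obtain ⟨i, hi⟩ := exists_norm_add_sub_mul_le he_bdd (he a) one_pos
  exact ⟨e i + (a - e i * a), hi, fun φ hφ => map_add_sub_mul_eq_one φ (ha φ hφ) (e i)⟩

/-- In a commutative semisimple regular Banach algebra with a bounded approximate identity
bounded by `c`, every compact subset `K` of the Gelfand spectrum admits an element of norm at
most `c + 1` whose Gelfand transform is identically `1` on `K`. -/
theorem stmt10 {A : Type*} [NormedCommRing A] [NormedAlgebra ℂ A] [CompleteSpace A]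
    (hss : ∀ a b : A, (∀ φ : characterSpace ℂ A, φ a = φ b) → a = b)
    (hreg : ∀ (K F : Set (characterSpace ℂ A)), IsCompact K → IsClosed F → Disjoint K F →
      ∃ a : A, (∀ φ ∈ K, φ a = 1) ∧ ∀ φ ∈ F, φ a = 0)
    (c : ℝ) (hc : 0 < c)
    {ι : Type*} (l : Filter ι) [l.NeBot] (e : ι → A)
    (he_bdd : ∀ i, ‖e i‖ ≤ c)
    (he : ∀ a : A, Filter.Tendsto (fun i => e i * a) l (nhds a))
    (K : Set (characterSpace ℂ A)) (hK : IsCompact K) :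
    ∃ u : A, ‖u‖ ≤ c + 1 ∧ ∀ φ ∈ K, φ u = 1 :=
  stmt10_general hreg c l e he_bdd he K hK
end

section
/- Let H be a hypergroup with left Haar measure λ, and let χ₀ be a strictly positive continuous character on H. Define a new convolution by (x ∘ y) := (χ₀ / χ₀(x·y)) (x·y) (renormalized by χ₀) with Haar measure λ' = χ₀² λ. Then for every f ∈ C_c(H): f ∘_{λ'} f^* = ((χ₀ f) ·_λ (χ₀ f)^*)/χ₀. Consequently, v is a (reduced) positive definite function for (H, ∘, λ') if and only if χ₀ v is a (reduced) positive definite function for (H, ·, λ). -/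
open MeasureTheory
open scoped ComplexOrder

/-- Hypergroup convolution of functions: `(f ·_λ g)(x) = ∫ f(y) g(ỹ · x) dλ(y)`, where the
point convolution `ỹ · x` is the measure `m (invol y) x`. -/
noncomputable def hconv {Hy : Type*} [MeasurableSpace Hy]
    (m : Hy → Hy → Measure Hy) (lam : Measure Hy) (invol : Hy → Hy)
    (f g : Hy → ℂ) : Hy → ℂ :=
  fun x => ∫ y, f y * ∫ z, g z ∂(m (invol y) x) ∂lam

/-- The involution `f^*(x) = conj f(x̃)` (the modular function is `1` on a commutative
hypergroup). -/
def fstar {Hy : Type*} (invol : Hy → Hy) (f : Hy → ℂ) : Hy → ℂ :=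
  fun x => starRingEnd ℂ (f (invol x))

/-- `v` is a reduced positive definite function for the hypergroup structure given by the
point convolutions `m`, Haar measure `lam` and involution `invol`:
`⟨v, f ∗ f^*⟩ ≥ 0` for all `f ∈ C_c(H)`. -/
def IsRPD {Hy : Type*} [TopologicalSpace Hy] [MeasurableSpace Hy]
    (m : Hy → Hy → Measure Hy) (lam : Measure Hy) (invol : Hy → Hy) (v : Hy → ℂ) : Prop :=
  ∀ f : Hy → ℂ, Continuous f → HasCompactSupport f →
    0 ≤ ∫ x, v x * hconv m lam invol f (fstar invol f) x ∂lam

/-!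
The density `χ₀(y)²` of `λ'` and the density `χ₀(z) / (χ₀(ỹ) χ₀(x))` of the point measure
`ỹ ∘ x` combine, since `χ₀(ỹ) = χ₀(y)`, into `χ₀(y) f(y) · χ₀(z) g(z) / χ₀(x)`; hence
`f ∘_{λ'} g = ((χ₀ f) ·_λ (χ₀ g)) / χ₀`, and `χ₀ f^* = (χ₀ f)^*`. Pairing with `v` against
`λ' = χ₀² λ` turns `⟨v, f ∘ f^*⟩_{λ'}` into `⟨χ₀ v, (χ₀ f) · (χ₀ f)^*⟩_λ`, and `f ↦ χ₀ f` is a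
bijection of `C_c(H)` because `χ₀` is continuous and nowhere zero.
-/

theorem integral_withDensity_ofReal {X E : Type*} [MeasurableSpace X] [NormedAddCommGroup E]
    [NormedSpace ℝ E] {μ : Measure X} {h : X → ℝ} (hh : Measurable h) (hh_nonneg : ∀ x, 0 ≤ h x)
    (g : X → E) :
    ∫ x, g x ∂μ.withDensity (fun x => ENNReal.ofReal (h x)) = ∫ x, h x • g x ∂μ := by
  rw [integral_withDensity_eq_integral_toReal_smul hh.ennreal_ofReal
    (Filter.Eventually.of_forall fun _ => ENNReal.ofReal_lt_top)]
  simp only [ENNReal.toReal_ofReal (hh_nonneg _)]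

theorem fstar_ofReal_mul {Hy : Type*} {invol : Hy → Hy} {χ₀ : Hy → ℝ}
    (hχ_inv : ∀ x, χ₀ (invol x) = χ₀ x) (f : Hy → ℂ) :
    fstar invol (fun y => (χ₀ y : ℂ) * f y) = fun y => (χ₀ y : ℂ) * fstar invol f y := by
  funext y
  simp [fstar, hχ_inv]

theorem hconv_renormalize {Hy : Type*} [MeasurableSpace Hy] (m : Hy → Hy → Measure Hy)
    (lam : Measure Hy) (invol : Hy → Hy) {χ₀ : Hy → ℝ} (hχ_meas : Measurable χ₀)
    (hχ_pos : ∀ x, 0 < χ₀ x) (hχ_inv : ∀ x, χ₀ (invol x) = χ₀ x) (f g : Hy → ℂ) (x : Hy) :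
    hconv (fun a b => (m a b).withDensity fun z => ENNReal.ofReal (χ₀ z / (χ₀ a * χ₀ b)))
        (lam.withDensity fun a => ENNReal.ofReal (χ₀ a ^ 2)) invol f g x =
      hconv m lam invol (fun y => (χ₀ y : ℂ) * f y) (fun y => (χ₀ y : ℂ) * g y) x / χ₀ x := by
  have hχ_ne : ∀ x, (χ₀ x : ℂ) ≠ 0 := fun x => Complex.ofReal_ne_zero.mpr (hχ_pos x).ne'
  unfold hconv
  rw [integral_withDensity_ofReal (hχ_meas.pow_const 2) fun _ => sq_nonneg _, ← integral_div]
  refine integral_congr_ae (Filter.Eventually.of_forall fun y => ?_)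
  dsimp only
  rw [integral_withDensity_ofReal (hχ_meas.div_const _)
    fun z => div_nonneg (hχ_pos z).le (mul_pos (hχ_pos _) (hχ_pos x)).le]
  simp only [Complex.real_smul, Complex.ofReal_div, Complex.ofReal_mul, Complex.ofReal_pow,
    hχ_inv, div_mul_eq_mul_div, integral_div]
  field_simp [hχ_ne x, hχ_ne y]

theorem integral_mul_div_withDensity_sq {X : Type*} [MeasurableSpace X] (μ : Measure X)
    {χ₀ : X → ℝ} (hχ_meas : Measurable χ₀) (hχ_ne : ∀ x, χ₀ x ≠ 0) (v F : X → ℂ) :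
    ∫ x, v x * (F x / χ₀ x) ∂μ.withDensity (fun x => ENNReal.ofReal (χ₀ x ^ 2)) =
      ∫ x, (χ₀ x : ℂ) * v x * F x ∂μ := by
  rw [integral_withDensity_ofReal (hχ_meas.pow_const 2) fun _ => sq_nonneg _]
  refine integral_congr_ae (Filter.Eventually.of_forall fun x => ?_)
  have : (χ₀ x : ℂ) ≠ 0 := Complex.ofReal_ne_zero.mpr (hχ_ne x)
  simp only [Complex.real_smul, Complex.ofReal_pow]
  field_simp

theorem isRPD_iff_of_integral_eq {Hy : Type*} [TopologicalSpace Hy] [MeasurableSpace Hy]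
    {m m' : Hy → Hy → Measure Hy} {lam lam' : Measure Hy} {invol : Hy → Hy} {v w χ : Hy → ℂ}
    (hχ_cont : Continuous χ) (hχ_ne : ∀ x, χ x ≠ 0)
    (h : ∀ f : Hy → ℂ, ∫ x, v x * hconv m' lam' invol f (fstar invol f) x ∂lam' =
      ∫ x, w x * hconv m lam invol (fun y => χ y * f y)
        (fstar invol fun y => χ y * f y) x ∂lam) :
    IsRPD m' lam' invol v ↔ IsRPD m lam invol w := by
  constructor
  · intro hv g hg_cont hg_supp
    have hχg : (fun y => χ y * (χ⁻¹ * g) y) = g :=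
      funext fun y => mul_inv_cancel_left₀ (hχ_ne y) _
    have := hv _ ((hχ_cont.inv₀ hχ_ne).mul hg_cont) hg_supp.mul_left
    rwa [h, hχg] at this
  · intro hw f hf_cont hf_supp
    rw [h]
    exact hw _ (hχ_cont.mul hf_cont) hf_supp.mul_left

theorem stmt16_general {Hy : Type*} [TopologicalSpace Hy]
    [MeasurableSpace Hy] [BorelSpace Hy]
    (m m' : Hy → Hy → Measure Hy) (lam lam' : Measure Hy)
    (invol : Hy → Hy)
    (χ₀ : Hy → ℝ) (hχ_cont : Continuous χ₀) (hχ_pos : ∀ x, 0 < χ₀ x)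
    (hχ_inv : ∀ x, χ₀ (invol x) = χ₀ x)
    (hlam' : lam' = lam.withDensity fun x => ENNReal.ofReal ((χ₀ x) ^ 2))
    (hm' : ∀ x y : Hy,
      m' x y = (m x y).withDensity fun z => ENNReal.ofReal (χ₀ z / (χ₀ x * χ₀ y))) :
    (∀ f : Hy → ℂ, Continuous f → HasCompactSupport f → ∀ x : Hy,
      hconv m' lam' invol f (fstar invol f) x =
        hconv m lam invol (fun y => (χ₀ y : ℂ) * f y)
          (fstar invol fun y => (χ₀ y : ℂ) * f y) x / (χ₀ x : ℂ)) ∧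
    (∀ v : Hy → ℂ,
      IsRPD m' lam' invol v ↔ IsRPD m lam invol fun x => (χ₀ x : ℂ) * v x) := by
  have hconv_eq : ∀ (f : Hy → ℂ) (x : Hy),
      hconv m' lam' invol f (fstar invol f) x =
        hconv m lam invol (fun y => (χ₀ y : ℂ) * f y)
          (fstar invol fun y => (χ₀ y : ℂ) * f y) x / (χ₀ x : ℂ) := by
    intro f x
    obtain rfl : m' = fun a b => (m a b).withDensity fun z =>
        ENNReal.ofReal (χ₀ z / (χ₀ a * χ₀ b)) := funext fun a => funext (hm' a)
    rw [hlam', hconv_renormalize m lam invol hχ_cont.measurable hχ_pos hχ_inv f (fstar invol f) x,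
      fstar_ofReal_mul hχ_inv]
  refine ⟨fun f _ _ => hconv_eq f, fun v => ?_⟩
  refine isRPD_iff_of_integral_eq (by fun_prop : Continuous fun x => (χ₀ x : ℂ))
    (fun x => Complex.ofReal_ne_zero.mpr (hχ_pos x).ne') fun f => ?_
  simp only [hconv_eq f]
  rw [hlam', integral_mul_div_withDensity_sq lam hχ_cont.measurable fun x => (hχ_pos x).ne']

/-- Renormalizing a commutative hypergroup by a strictly positive character `χ₀`
(`x ∘ y := (χ₀/χ₀(x·y)) (x·y)`, Haar measure `λ' = χ₀² λ`) satisfies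
`f ∘_{λ'} f^* = ((χ₀ f) ·_λ (χ₀ f)^*)/χ₀` for `f ∈ C_c(H)`; consequently `v` is reduced
positive definite for `(H, ∘, λ')` iff `χ₀ v` is reduced positive definite for `(H, ·, λ)`. -/
theorem stmt16 {Hy : Type*} [TopologicalSpace Hy] [T2Space Hy] [LocallyCompactSpace Hy]
    [MeasurableSpace Hy] [BorelSpace Hy]
    (m m' : Hy → Hy → Measure Hy) (lam lam' : Measure Hy)
    (invol : Hy → Hy) (hinvol_cont : Continuous invol)
    (hinvol : ∀ x, invol (invol x) = x)
    (χ₀ : Hy → ℝ) (hχ_cont : Continuous χ₀) (hχ_pos : ∀ x, 0 < χ₀ x)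
    (hχ_char : ∀ x y : Hy, ∫ z, χ₀ z ∂(m x y) = χ₀ x * χ₀ y)
    (hχ_inv : ∀ x, χ₀ (invol x) = χ₀ x)
    (hlam' : lam' = lam.withDensity fun x => ENNReal.ofReal ((χ₀ x) ^ 2))
    (hm' : ∀ x y : Hy,
      m' x y = (m x y).withDensity fun z => ENNReal.ofReal (χ₀ z / (χ₀ x * χ₀ y))) :
    (∀ f : Hy → ℂ, Continuous f → HasCompactSupport f → ∀ x : Hy,
      hconv m' lam' invol f (fstar invol f) x =
        hconv m lam invol (fun y => (χ₀ y : ℂ) * f y)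
          (fstar invol fun y => (χ₀ y : ℂ) * f y) x / (χ₀ x : ℂ)) ∧
    (∀ v : Hy → ℂ,
      IsRPD m' lam' invol v ↔ IsRPD m lam invol fun x => (χ₀ x : ℂ) * v x) :=
  stmt16_general m m' lam lam' invol χ₀ hχ_cont hχ_pos hχ_inv hlam' hm'
end
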